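/- Let N ≥ 1, l ≤ L be natural numbers and let h : Fin (l+1) → ℂ be a nonzero channel tap vector, and let T be the associated N × (N+L) banded Toeplitz matrix. Then the kernel of the linear map x ↦ T·x from ℂ^{N+L} to ℂ^N has dimension exactly L. -/

import Mathlib

open Matrix

/-- The `N × (N+L)` banded Toeplitz channel matrix built from the taps `h`:
`T i j = h (L + i - j)` when `0 ≤ L + i - j ≤ l`, and `0` otherwise. -/
noncomputable def bandedToeplitz (N l L : ℕ) (h : Fin (l + 1) → ℂ) :
    Matrix (Fin N) (Fin (N + L)) ℂ :=
  Matrix.of fun i j =>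
    if hij : j.val ≤ L + i.val ∧ L + i.val - j.val ≤ l then
      h ⟨L + i.val - j.val, by omega⟩
    else 0

/-!
Let `k` be the largest index with `h k ≠ 0`. Since `k ≤ l ≤ L`, the `N` consecutive columns
starting at column `L - k` form an upper triangular `N × N` submatrix with constant diagonal
`h k`, so `T` has full row rank `N`, and rank–nullity leaves a kernel of dimension `L`.
-/

theorem Fin.exists_last_ne_zero {M : Type*} [Zero M] {n : ℕ} {f : Fin n → M} (hf : f ≠ 0) :
    ∃ k, f k ≠ 0 ∧ ∀ j, k < j → f j = 0 := by
  classical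
  obtain ⟨i, hi⟩ := Function.ne_iff.mp hf
  obtain ⟨k, hk, hmax⟩ :=
    (Finset.univ.filter (f · ≠ 0)).exists_max_image id ⟨i, by simpa using hi⟩
  refine ⟨k, by simpa using hk, fun j hkj => ?_⟩
  by_contra hj
  exact (hmax j (by simpa using hj)).not_gt hkj

namespace Matrix

variable {m n R : Type*} [Fintype n] [Field R]

theorem rank_add_finrank_ker_mulVecLin (A : Matrix m n R) :
    A.rank + Module.finrank R (LinearMap.ker A.mulVecLin) = Fintype.card n := by
  rw [rank, LinearMap.finrank_range_add_finrank_ker, Module.finrank_fintype_fun_eq_card]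

theorem rank_eq_card_height_of_det_submatrix_ne_zero [Fintype m] [DecidableEq m]
    (A : Matrix m n R) (c : m → n) (hc : (A.submatrix id c).det ≠ 0) :
    A.rank = Fintype.card m :=
  le_antisymm A.rank_le_card_height <|
    calc Fintype.card m = (A.submatrix id c).rank :=
          (rank_of_isUnit _ ((isUnit_iff_isUnit_det _).mpr hc.isUnit)).symm
      _ ≤ A.rank := rank_submatrix_le A id c

end Matrix

section BandedToeplitz

variable {N l L : ℕ} {h : Fin (l + 1) → ℂ}

theorem bandedToeplitz_apply_of_add_eq (i : Fin N) (j : Fin (N + L)) (k : Fin (l + 1))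
    (hijk : L + i.val = j.val + k.val) : bandedToeplitz N l L h i j = h k := by
  rw [bandedToeplitz, of_apply, dif_pos (by omega)]
  congr
  omega

theorem bandedToeplitz_apply_eq_zero_of_lt (i : Fin N) (j : Fin (N + L)) (k : Fin (l + 1))
    (hlast : ∀ k', k < k' → h k' = 0) (hjk : j.val + k.val < L + i.val) :
    bandedToeplitz N l L h i j = 0 := by
  rw [bandedToeplitz, of_apply]
  split_ifs with hij
  · exact hlast _ (Fin.lt_def.mpr (by simp only; omega))
  · rfl

/-- The column `L - k + i` of `bandedToeplitz N l L h`; its row-`i` entry is the tap `h k`. -/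
def bandedToeplitzPivotCol (N L k : ℕ) (i : Fin N) : Fin (N + L) :=
  ⟨L - k + i.val, by omega⟩

theorem det_bandedToeplitz_submatrix_pivotCol (k : Fin (l + 1)) (hkL : k.val ≤ L)
    (hlast : ∀ k', k < k' → h k' = 0) :
    ((bandedToeplitz N l L h).submatrix id (bandedToeplitzPivotCol N L k)).det = h k ^ N := by
  have htriangular :
      ((bandedToeplitz N l L h).submatrix id (bandedToeplitzPivotCol N L k)).IsUpperTriangular :=
    fun i j (hji : j < i) => bandedToeplitz_apply_eq_zero_of_lt i _ k hlast <| by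
      simp only [bandedToeplitzPivotCol, Fin.lt_def] at hji ⊢
      omega
  rw [det_of_isUpperTriangular htriangular]
  simp only [submatrix_apply, id]
  rw [Finset.prod_congr rfl fun i _ =>
    bandedToeplitz_apply_of_add_eq i _ k (by simp only [bandedToeplitzPivotCol]; omega)]
  simp

theorem bandedToeplitz_rank (hlL : l ≤ L) (hh : h ≠ 0) : (bandedToeplitz N l L h).rank = N := by
  obtain ⟨k, hk, hlast⟩ := Fin.exists_last_ne_zero hh
  have hkL : k.val ≤ L := by omega
  have hdet := det_bandedToeplitz_submatrix_pivotCol (N := N) k hkL hlast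
  exact (rank_eq_card_height_of_det_submatrix_ne_zero _ _ (hdet ▸ pow_ne_zero N hk)).trans
    (Fintype.card_fin N)

end BandedToeplitz

theorem bandedToeplitz_ker_finrank_general (N l L : ℕ) (hlL : l ≤ L)
    (h : Fin (l + 1) → ℂ) (hh : h ≠ 0) :
    Module.finrank ℂ (LinearMap.ker (bandedToeplitz N l L h).mulVecLin) = L := by
  have hrankNullity := (bandedToeplitz N l L h).rank_add_finrank_ker_mulVecLin
  rw [bandedToeplitz_rank hlL hh, Fintype.card_fin] at hrankNullity
  omega

/-- the kernel of `x ↦ T · x` has dimension exactly `L`. -/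
theorem bandedToeplitz_ker_finrank (N l L : ℕ) (hN : 1 ≤ N) (hlL : l ≤ L)
    (h : Fin (l + 1) → ℂ) (hh : h ≠ 0) :
    Module.finrank ℂ (LinearMap.ker (bandedToeplitz N l L h).mulVecLin) = L :=
  bandedToeplitz_ker_finrank_general N l L hlL h hh
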